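/- arXiv:1504.08297 — 2 statements merged into one kernel-verified Lean document; each statement's English description precedes it below -/
import Mathlib

section
/- Let E be a finite-dimensional real normed vector space, U ⊆ E an open set, A : U → (E →L[ℝ] Mₙ(ℝ)) a continuously differentiable Mₙ(ℝ)-valued 1-form, and u : U → GLₙ(ℝ) a twice continuously differentiable map. Define the curvature of A by F_A(x)(v,w) := (DA)(x)(v)(w) − (DA)(x)(w)(v) + A(x)(v)·A(x)(w) − A(x)(w)·A(x)(v), and the dressed potential Â(x)(v) := u(x)⁻¹ A(x)(v) u(x) + u(x)⁻¹ (Du)(x)(v). Then the curvature of the dressed potential equals the conjugated curvature: F_Â(x)(v,w) = u(x)⁻¹ · F_A(x)(v,w) · u(x) for all x ∈ U and v, w ∈ E. -/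
/-!
Write `g = u` and `Â_w = g⁻¹ (A_w g + Dg_w)`. Differentiating with `D(g⁻¹) = -g⁻¹ (Dg) g⁻¹`
expresses `DÂ` through `DA`, `Dg` and `D²g`. In the antisymmetrisation `DÂ(v)(w) − DÂ(w)(v)`
the `D²g` terms cancel because `D²g` is symmetric (`g` is `C²`), and the remaining terms that are
linear or quadratic in `Dg` cancel against those of `[Â_v, Â_w]`, using only `g g⁻¹ = 1`.
-/

open Matrix ContinuousLinearMap

attribute [local instance] Matrix.linftyOpNormedAddCommGroup Matrix.linftyOpNormedRing
  Matrix.linftyOpNormedAlgebra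

noncomputable section

variable {E : Type*} [NormedAddCommGroup E] [NormedSpace ℝ E]

def curv {n : ℕ} (A : E → (E →L[ℝ] Matrix (Fin n) (Fin n) ℝ)) :
    E → E → E → Matrix (Fin n) (Fin n) ℝ :=
  fun x v w =>
    fderiv ℝ A x v w - fderiv ℝ A x w v + A x v * A x w - A x w * A x v

/-- The dressed potential `Â(x)(v) = u(x)⁻¹ A(x)(v) u(x) + u(x)⁻¹ (Du)(x)(v)`. -/
def dressed {n : ℕ} (A : E → (E →L[ℝ] Matrix (Fin n) (Fin n) ℝ))
    (u : E → GL (Fin n) ℝ) : E → (E →L[ℝ] Matrix (Fin n) (Fin n) ℝ) :=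
  fun x =>
    (ContinuousLinearMap.mul ℝ (Matrix (Fin n) (Fin n) ℝ) (↑(u x)⁻¹ : Matrix (Fin n) (Fin n) ℝ)).comp
      (HAdd.hAdd (α := E →L[ℝ] Matrix (Fin n) (Fin n) ℝ) (β := E →L[ℝ] Matrix (Fin n) (Fin n) ℝ)
        (((ContinuousLinearMap.mul ℝ (Matrix (Fin n) (Fin n) ℝ)).flip
          ((u x : Matrix (Fin n) (Fin n) ℝ))).comp (A x))
        (fderiv ℝ (fun y => (u y : Matrix (Fin n) (Fin n) ℝ)) x))

instance clmMatrixNormedAddCommGroup {n : ℕ} :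
    NormedAddCommGroup (E →L[ℝ] Matrix (Fin n) (Fin n) ℝ) :=
  ContinuousLinearMap.toNormedAddCommGroup

instance clmMatrixNormedSpace {n : ℕ} :
    NormedSpace ℝ (E →L[ℝ] Matrix (Fin n) (Fin n) ℝ) :=
  ContinuousLinearMap.toNormedSpace

section General

variable {𝕜 V F G R : Type*} [NontriviallyNormedField 𝕜]
  [NormedAddCommGroup V] [NormedSpace 𝕜 V] {x : V}

theorem fderiv_clm_apply_const [NormedAddCommGroup F] [NormedSpace 𝕜 F]
    [NormedAddCommGroup G] [NormedSpace 𝕜 G] {c : V → F →L[𝕜] G} (hc : DifferentiableAt 𝕜 c x)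
    (v : V) (w : F) : fderiv 𝕜 (fun y => c y w) x v = fderiv 𝕜 c x v w := by
  rw [fderiv_clm_apply hc (differentiableAt_const w)]
  simp

variable [NormedRing R] [HasSummableGeomSeries R] [NormedAlgebra 𝕜 R] {u : V → Rˣ}

theorem HasFDerivAt.units_inv {u' : V →L[𝕜] R} (hu : HasFDerivAt (fun y => (u y : R)) u' x) :
    HasFDerivAt (fun y => (↑(u y)⁻¹ : R)) ((-mulLeftRight 𝕜 R ↑(u x)⁻¹ ↑(u x)⁻¹).comp u') x := by
  have h := (hasFDerivAt_ringInverse (u x)).comp x hu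
  simp only [Function.comp_def, Ring.inverse_unit] at h
  exact h

theorem fderiv_units_inv_mul_mul_add_apply {a c : V → R}
    (hu : DifferentiableAt 𝕜 (fun y => (u y : R)) x) (ha : DifferentiableAt 𝕜 a x)
    (hc : DifferentiableAt 𝕜 c x) (v : V) :
    fderiv 𝕜 (fun y => ↑(u y)⁻¹ * (a y * u y + c y)) x v =
      ↑(u x)⁻¹ * (fderiv 𝕜 a x v * u x + a x * fderiv 𝕜 (fun y => (u y : R)) x v
          + fderiv 𝕜 c x v)
        - ↑(u x)⁻¹ * fderiv 𝕜 (fun y => (u y : R)) x v * ↑(u x)⁻¹ * (a x * u x + c x) := by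
  have hinv := hu.hasFDerivAt.units_inv
  rw [fderiv_fun_mul' hinv.differentiableAt ((ha.fun_mul hu).fun_add hc),
    fderiv_fun_add (ha.fun_mul hu) hc, fderiv_fun_mul' ha hu, hinv.fderiv]
  simp only [_root_.add_apply, _root_.smul_apply, _root_.neg_apply, smul_eq_mul,
    MulOpposite.smul_eq_mul_unop, MulOpposite.unop_op, ContinuousLinearMap.comp_apply,
    mulLeftRight_apply]
  noncomm_ring

end General

theorem conj_curvature_identity {R : Type*} [Ring R] {g g' : R} (h : g * g' = 1)
    (a b p q s da db : R) :
    g' * (da * g + b * p + s) - g' * p * g' * (b * g + q)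
      - (g' * (db * g + a * q + s) - g' * q * g' * (a * g + p))
      + g' * (a * g + p) * (g' * (b * g + q)) - g' * (b * g + q) * (g' * (a * g + p))
      = g' * (da - db + a * b - b * a) * g := by
  have hcancel : ∀ z : R, z * g * g' = z := fun z => by rw [mul_assoc, h, mul_one]
  simp only [mul_add, add_mul, mul_sub, sub_mul, ← mul_assoc, hcancel]
  abel

section Dressing

local notation "𝕄" n => Matrix (Fin n) (Fin n) ℝ

variable {n : ℕ} {A : E → E →L[ℝ] 𝕄 n} {u : E → GL (Fin n) ℝ} {x : E}

theorem dressed_apply (v : E) :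
    dressed A u x v = (↑(u x)⁻¹ : 𝕄 n) * (A x v * u x + fderiv ℝ (fun y => (u y : 𝕄 n)) x v) :=
  rfl

theorem differentiableAt_dressed (hA : DifferentiableAt ℝ A x)
    (hu : DifferentiableAt ℝ (fun y => (u y : 𝕄 n)) x)
    (hDu : DifferentiableAt ℝ (fderiv ℝ (fun y => (u y : 𝕄 n))) x) :
    DifferentiableAt ℝ (dressed A u) x :=
  ((differentiableAt_const _).clm_apply hu.hasFDerivAt.units_inv.differentiableAt).clm_comp
    ((((differentiableAt_const _).clm_apply hu).clm_comp hA).add hDu)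

theorem fderiv_dressed_apply (hA : DifferentiableAt ℝ A x)
    (hu : DifferentiableAt ℝ (fun y => (u y : 𝕄 n)) x)
    (hDu : DifferentiableAt ℝ (fderiv ℝ (fun y => (u y : 𝕄 n))) x) (v w : E) :
    fderiv ℝ (dressed A u) x v w =
      (↑(u x)⁻¹ : 𝕄 n) * (fderiv ℝ A x v w * u x + A x w * fderiv ℝ (fun y => (u y : 𝕄 n)) x v
          + fderiv ℝ (fderiv ℝ (fun y => (u y : 𝕄 n))) x v w)
        - (↑(u x)⁻¹ : 𝕄 n) * fderiv ℝ (fun y => (u y : 𝕄 n)) x v * (↑(u x)⁻¹ : 𝕄 n)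
          * (A x w * u x + fderiv ℝ (fun y => (u y : 𝕄 n)) x w) := by
  set g : E → 𝕄 n := fun y => u y
  -- The `linfty` norm instances on `𝕄 n` are local `def`s, so general lemmas instantiated at `𝕄 n`
  -- match these terms only up to unfolding them: they are applied by unification, not by `rw`.
  calc fderiv ℝ (dressed A u) x v w
      = fderiv ℝ (fun y => (↑(u y)⁻¹ : 𝕄 n) * (A y w * g y + fderiv ℝ g y w)) x v :=
        (fderiv_clm_apply_const (differentiableAt_dressed hA hu hDu) v w).symm
    _ = (↑(u x)⁻¹ : 𝕄 n) * (fderiv ℝ (fun y => A y w) x v * g x + A x w * fderiv ℝ g x v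
          + fderiv ℝ (fun y => fderiv ℝ g y w) x v)
        - (↑(u x)⁻¹ : 𝕄 n) * fderiv ℝ g x v * (↑(u x)⁻¹ : 𝕄 n) * (A x w * g x + fderiv ℝ g x w) :=
        fderiv_units_inv_mul_mul_add_apply hu (hA.clm_apply (differentiableAt_const w))
          (hDu.clm_apply (differentiableAt_const w)) v
    _ = _ := by
      rw [show fderiv ℝ (fun y => A y w) x v = fderiv ℝ A x v w from
          fderiv_clm_apply_const hA v w,
        show fderiv ℝ (fun y => fderiv ℝ g y w) x v = fderiv ℝ (fderiv ℝ g) x v w from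
          fderiv_clm_apply_const hDu v w]

end Dressing

theorem stmt_2_general {n : ℕ} (U : Set E) (hU : IsOpen U)
    (A : E → (E →L[ℝ] Matrix (Fin n) (Fin n) ℝ)) (u : E → GL (Fin n) ℝ)
    (hA : ContDiffOn ℝ 1 A U)
    (hu : ContDiffOn ℝ 2 (fun y => (u y : Matrix (Fin n) (Fin n) ℝ)) U) :
    ∀ x ∈ U, ∀ v w : E,
      curv (dressed A u) x v w
        = (↑(u x)⁻¹ : Matrix (Fin n) (Fin n) ℝ) * curv A x v w * (u x : Matrix (Fin n) (Fin n) ℝ) := by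
  intro x hx v w
  have hUx : U ∈ nhds x := hU.mem_nhds hx
  have hA' := (hA.contDiffAt hUx).differentiableAt one_ne_zero
  have hu' := (hu.contDiffAt hUx).differentiableAt two_ne_zero
  have hDu := ((hu.fderiv_of_isOpen hU le_rfl).contDiffAt hUx).differentiableAt one_ne_zero
  have hsymm : fderiv ℝ (fderiv ℝ (fun y => (u y : Matrix (Fin n) (Fin n) ℝ))) x w v
      = fderiv ℝ (fderiv ℝ (fun y => (u y : Matrix (Fin n) (Fin n) ℝ))) x v w :=
    (hu.contDiffAt hUx).isSymmSndFDerivAt (by simp [minSmoothness_of_isRCLikeNormedField]) w v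
  rw [curv, curv, fderiv_dressed_apply hA' hu' hDu, fderiv_dressed_apply hA' hu' hDu, hsymm,
    dressed_apply, dressed_apply]
  exact conj_curvature_identity (u x).mul_inv _ _ _ _ _ _ _

/-- The curvature of the dressed potential `Â = u⁻¹Au + u⁻¹Du` equals the conjugated
curvature: `F_Â(x)(v,w) = u(x)⁻¹ F_A(x)(v,w) u(x)` on `U`. -/
theorem stmt_2 [FiniteDimensional ℝ E] {n : ℕ} (U : Set E) (hU : IsOpen U)
    (A : E → (E →L[ℝ] Matrix (Fin n) (Fin n) ℝ)) (u : E → GL (Fin n) ℝ)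
    (hA : ContDiffOn ℝ 1 A U)
    (hu : ContDiffOn ℝ 2 (fun y => (u y : Matrix (Fin n) (Fin n) ℝ)) U) :
    ∀ x ∈ U, ∀ v w : E,
      curv (dressed A u) x v w
        = (↑(u x)⁻¹ : Matrix (Fin n) (Fin n) ℝ) * curv A x v w * (u x : Matrix (Fin n) (Fin n) ℝ) :=
  stmt_2_general U hU A u hA hu

end
end

section
/- Let m be a positive integer, R a commutative ring which is an ℝ-algebra (modeling the algebra of even-degree differential forms on a chart), and η = diag(1, −1, …, −1) ∈ Mₘ(ℝ) regarded in Mₘ(R). For a row vector q over R set q^t := η⁻¹qᵀ and k₁(q) := [[1, q, ½ q q^t],[0, 1ₘ, q^t],[0, 0, 1]] (blocks of sizes (1, m, 1)). Let Ω be the block matrix Ω = [[f, Π, 0],[Θ, F, η⁻¹Πᵀ],[0, Θᵀη, −f]] with f ∈ R, Π ∈ R^{1×m}, Θ ∈ R^{m×1}, F ∈ Mₘ(R). Then the matrix Ω₁ := k₁(q)⁻¹ · Ω · k₁(q) has the following blocks: its (1,1) block is f − qΘ, its (2,1) block is Θ, its (2,2) block is F₁ := Θq + F − q^tΘᵀη,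 its (1,2) block is Π − qF₁ + fq − ½(q q^t)Θᵀη, its (3,2) block is Θᵀη, and its (3,3) block is −(f − qΘ). In particular, the torsion block Θ is unchanged by the dressing by u₁ = k₁(q). -/
/-!
Since `η² = 1`, we have `k₁(q)⁻¹ = k₁(-q)` and `Θᵀη q^t = qΘ`, so the blocks of
`Ω₁ = k₁(-q) Ω k₁(q)` come out of block multiplication; beyond these two identities only
`½ + ½ = 1` (in the `𝔤₁` block) is needed. The torsion survives because the middle row of
`k₁(-q)` is `(0, 1ₘ, -q^t)`, the first column of `Ω` is `(f, Θ, 0)` and that of `k₁(q)` is `e₁`.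
-/

open Matrix

/-- 3×3 block matrix with block sizes (1, m, 1). -/
def B3 {R : Type*} {m : ℕ}
    (a11 : Matrix (Fin 1) (Fin 1) R) (a12 : Matrix (Fin 1) (Fin m) R) (a13 : Matrix (Fin 1) (Fin 1) R)
    (a21 : Matrix (Fin m) (Fin 1) R) (a22 : Matrix (Fin m) (Fin m) R) (a23 : Matrix (Fin m) (Fin 1) R)
    (a31 : Matrix (Fin 1) (Fin 1) R) (a32 : Matrix (Fin 1) (Fin m) R) (a33 : Matrix (Fin 1) (Fin 1) R) :
    Matrix (Fin 1 ⊕ (Fin m ⊕ Fin 1)) (Fin 1 ⊕ (Fin m ⊕ Fin 1)) R :=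
  Matrix.fromBlocks a11 (Matrix.fromCols a12 a13) (Matrix.fromRows a21 a31)
    (Matrix.fromBlocks a22 a23 a32 a33)

/-- Block extractors for a 3×3 block matrix with block sizes (1, m, 1). -/
def blk11 {R : Type*} {m : ℕ} (M : Matrix (Fin 1 ⊕ (Fin m ⊕ Fin 1)) (Fin 1 ⊕ (Fin m ⊕ Fin 1)) R) :
    Matrix (Fin 1) (Fin 1) R := M.submatrix Sum.inl Sum.inl
def blk12 {R : Type*} {m : ℕ} (M : Matrix (Fin 1 ⊕ (Fin m ⊕ Fin 1)) (Fin 1 ⊕ (Fin m ⊕ Fin 1)) R) :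
    Matrix (Fin 1) (Fin m) R := M.submatrix Sum.inl (fun j => Sum.inr (Sum.inl j))
def blk13 {R : Type*} {m : ℕ} (M : Matrix (Fin 1 ⊕ (Fin m ⊕ Fin 1)) (Fin 1 ⊕ (Fin m ⊕ Fin 1)) R) :
    Matrix (Fin 1) (Fin 1) R := M.submatrix Sum.inl (fun j => Sum.inr (Sum.inr j))
def blk21 {R : Type*} {m : ℕ} (M : Matrix (Fin 1 ⊕ (Fin m ⊕ Fin 1)) (Fin 1 ⊕ (Fin m ⊕ Fin 1)) R) :
    Matrix (Fin m) (Fin 1) R := M.submatrix (fun i => Sum.inr (Sum.inl i)) Sum.inl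
def blk22 {R : Type*} {m : ℕ} (M : Matrix (Fin 1 ⊕ (Fin m ⊕ Fin 1)) (Fin 1 ⊕ (Fin m ⊕ Fin 1)) R) :
    Matrix (Fin m) (Fin m) R := M.submatrix (fun i => Sum.inr (Sum.inl i)) (fun j => Sum.inr (Sum.inl j))
def blk23 {R : Type*} {m : ℕ} (M : Matrix (Fin 1 ⊕ (Fin m ⊕ Fin 1)) (Fin 1 ⊕ (Fin m ⊕ Fin 1)) R) :
    Matrix (Fin m) (Fin 1) R := M.submatrix (fun i => Sum.inr (Sum.inl i)) (fun j => Sum.inr (Sum.inr j))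
def blk31 {R : Type*} {m : ℕ} (M : Matrix (Fin 1 ⊕ (Fin m ⊕ Fin 1)) (Fin 1 ⊕ (Fin m ⊕ Fin 1)) R) :
    Matrix (Fin 1) (Fin 1) R := M.submatrix (fun i => Sum.inr (Sum.inr i)) Sum.inl
def blk32 {R : Type*} {m : ℕ} (M : Matrix (Fin 1 ⊕ (Fin m ⊕ Fin 1)) (Fin 1 ⊕ (Fin m ⊕ Fin 1)) R) :
    Matrix (Fin 1) (Fin m) R := M.submatrix (fun i => Sum.inr (Sum.inr i)) (fun j => Sum.inr (Sum.inl j))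
def blk33 {R : Type*} {m : ℕ} (M : Matrix (Fin 1 ⊕ (Fin m ⊕ Fin 1)) (Fin 1 ⊕ (Fin m ⊕ Fin 1)) R) :
    Matrix (Fin 1) (Fin 1) R := M.submatrix (fun i => Sum.inr (Sum.inr i)) (fun j => Sum.inr (Sum.inr j))

/-- The Minkowski matrix `diag(1, −1, …, −1)` of signature `(1, m−1)`, regarded in `Mₘ(R)`. -/
def MinkR (m : ℕ) (R : Type*) [CommRing R] [Algebra ℝ R] : Matrix (Fin m) (Fin m) R :=
  (Matrix.diagonal fun i : Fin m => if (i : ℕ) = 0 then (1 : ℝ) else -1).map (algebraMap ℝ R)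

/-- For a row vector `q` over `R`, the column vector `q^t := η⁻¹ qᵀ`. -/
noncomputable def rTR {m : ℕ} {R : Type*} [CommRing R] [Algebra ℝ R]
    (q : Matrix (Fin 1) (Fin m) R) : Matrix (Fin m) (Fin 1) R :=
  (MinkR m R)⁻¹ * q.transpose

/-- The special conformal (inversion) group element
`k₁(q) = [[1, q, ½ q q^t],[0, 1ₘ, q^t],[0, 0, 1]]` over `R`. -/
noncomputable def k1R {m : ℕ} {R : Type*} [CommRing R] [Algebra ℝ R]
    (q : Matrix (Fin 1) (Fin m) R) :
    Matrix (Fin 1 ⊕ (Fin m ⊕ Fin 1)) (Fin 1 ⊕ (Fin m ⊕ Fin 1)) R :=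
  B3 1 q ((2⁻¹ : ℝ) • (q * rTR q)) 0 1 (rTR q) 0 0 1

namespace Matrix

variable {R n n₁ n₂ : Type*} [Add R]

lemma fromCols_add (A B : Matrix n n₁ R) (C D : Matrix n n₂ R) :
    fromCols A C + fromCols B D = fromCols (A + B) (C + D) := by
  ext _ (_ | _) <;> rfl

lemma fromRows_add (A B : Matrix n₁ n R) (C D : Matrix n₂ n R) :
    fromRows A C + fromRows B D = fromRows (A + B) (C + D) := by
  ext (_ | _) _ <;> rfl

end Matrix

section BlockMatrix

variable {R : Type*} {m : ℕ}
  (a11 : Matrix (Fin 1) (Fin 1) R) (a12 : Matrix (Fin 1) (Fin m) R) (a13 : Matrix (Fin 1) (Fin 1) R)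
  (a21 : Matrix (Fin m) (Fin 1) R) (a22 : Matrix (Fin m) (Fin m) R) (a23 : Matrix (Fin m) (Fin 1) R)
  (a31 : Matrix (Fin 1) (Fin 1) R) (a32 : Matrix (Fin 1) (Fin m) R) (a33 : Matrix (Fin 1) (Fin 1) R)

@[simp] lemma blk11_B3 : blk11 (B3 a11 a12 a13 a21 a22 a23 a31 a32 a33) = a11 := rfl
@[simp] lemma blk12_B3 : blk12 (B3 a11 a12 a13 a21 a22 a23 a31 a32 a33) = a12 := rfl
@[simp] lemma blk21_B3 : blk21 (B3 a11 a12 a13 a21 a22 a23 a31 a32 a33) = a21 := rfl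
@[simp] lemma blk22_B3 : blk22 (B3 a11 a12 a13 a21 a22 a23 a31 a32 a33) = a22 := rfl
@[simp] lemma blk32_B3 : blk32 (B3 a11 a12 a13 a21 a22 a23 a31 a32 a33) = a32 := rfl
@[simp] lemma blk33_B3 : blk33 (B3 a11 a12 a13 a21 a22 a23 a31 a32 a33) = a33 := rfl

lemma B3_one [Semiring R] : (B3 (m := m) 1 0 0 0 1 0 0 0 1 : Matrix _ _ R) = 1 := by
  simp only [B3, fromCols_zero, fromRows_zero, fromBlocks_one]

lemma B3_mul [Semiring R]
    (b11 : Matrix (Fin 1) (Fin 1) R) (b12 : Matrix (Fin 1) (Fin m) R) (b13 : Matrix (Fin 1) (Fin 1) R)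
    (b21 : Matrix (Fin m) (Fin 1) R) (b22 : Matrix (Fin m) (Fin m) R) (b23 : Matrix (Fin m) (Fin 1) R)
    (b31 : Matrix (Fin 1) (Fin 1) R) (b32 : Matrix (Fin 1) (Fin m) R) (b33 : Matrix (Fin 1) (Fin 1) R) :
    B3 a11 a12 a13 a21 a22 a23 a31 a32 a33 * B3 b11 b12 b13 b21 b22 b23 b31 b32 b33
      = B3 (a11*b11 + a12*b21 + a13*b31) (a11*b12 + a12*b22 + a13*b32) (a11*b13 + a12*b23 + a13*b33)
           (a21*b11 + a22*b21 + a23*b31) (a21*b12 + a22*b22 + a23*b32) (a21*b13 + a22*b23 + a23*b33)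
           (a31*b11 + a32*b21 + a33*b31) (a31*b12 + a32*b22 + a33*b32) (a31*b13 + a32*b23 + a33*b33) := by
  simp only [B3, fromBlocks_multiply, fromCols_mul_fromRows, fromRows_mul,
    mul_fromCols, fromCols_mul_fromBlocks, fromBlocks_mul_fromRows,
    fromCols_add, fromRows_add, fromCols_fromRows_eq_fromBlocks, fromBlocks_add, add_assoc]

end BlockMatrix

section Minkowski

variable {m : ℕ} {R : Type*} [CommRing R] [Algebra ℝ R]

lemma MinkR_mul_self : MinkR m R * MinkR m R = 1 := by
  have hsq (i : Fin m) : (if (i : ℕ) = 0 then (1 : ℝ) else -1) * (if (i : ℕ) = 0 then 1 else -1) = 1 := by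
    split_ifs <;> norm_num
  simp only [MinkR, ← Matrix.map_mul, diagonal_mul_diagonal, hsq, diagonal_one,
    Matrix.map_one _ (map_zero _) (map_one _)]

lemma MinkR_inv : (MinkR m R)⁻¹ = MinkR m R := inv_eq_right_inv MinkR_mul_self

lemma rTR_neg (q : Matrix (Fin 1) (Fin m) R) : rTR (-q) = -rTR q := by
  simp [rTR]

lemma transpose_mul_MinkR_mul_rTR (Θ : Matrix (Fin m) (Fin 1) R) (q : Matrix (Fin 1) (Fin m) R) :
    Θᵀ * MinkR m R * rTR q = q * Θ := by
  rw [rTR, MinkR_inv, Matrix.mul_assoc, ← Matrix.mul_assoc (MinkR m R), MinkR_mul_self,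
    Matrix.one_mul, ← transpose_mul]
  ext i j
  fin_cases i; fin_cases j; rfl

lemma k1R_inv (q : Matrix (Fin 1) (Fin m) R) : (k1R q)⁻¹ = k1R (-q) := by
  refine inv_eq_left_inv ?_
  rw [k1R, k1R, B3_mul, rTR_neg, ← B3_one]
  congr 1 <;> simp only [Matrix.one_mul, Matrix.mul_one, Matrix.mul_zero, Matrix.zero_mul,
    add_zero, zero_add, Matrix.neg_mul, Matrix.mul_neg, neg_neg, smul_mul_assoc, mul_smul_comm]
    <;> module

end Minkowski

theorem stmt_9_general (m : ℕ) (R : Type*) [CommRing R] [Algebra ℝ R]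
    (q : Matrix (Fin 1) (Fin m) R)
    (f : R) (Pform : Matrix (Fin 1) (Fin m) R) (Θ : Matrix (Fin m) (Fin 1) R)
    (F : Matrix (Fin m) (Fin m) R) :
    blk11 ((k1R q)⁻¹ * B3 (f • 1) Pform 0 Θ F ((MinkR m R)⁻¹ * Pform.transpose)
        0 (Θ.transpose * MinkR m R) ((-f) • 1) * k1R q) = f • 1 - q * Θ ∧
    blk21 ((k1R q)⁻¹ * B3 (f • 1) Pform 0 Θ F ((MinkR m R)⁻¹ * Pform.transpose)
        0 (Θ.transpose * MinkR m R) ((-f) • 1) * k1R q) = Θ ∧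
    blk22 ((k1R q)⁻¹ * B3 (f • 1) Pform 0 Θ F ((MinkR m R)⁻¹ * Pform.transpose)
        0 (Θ.transpose * MinkR m R) ((-f) • 1) * k1R q)
      = Θ * q + F - rTR q * (Θ.transpose * MinkR m R) ∧
    blk12 ((k1R q)⁻¹ * B3 (f • 1) Pform 0 Θ F ((MinkR m R)⁻¹ * Pform.transpose)
        0 (Θ.transpose * MinkR m R) ((-f) • 1) * k1R q)
      = Pform - q * (Θ * q + F - rTR q * (Θ.transpose * MinkR m R)) + f • q
          - (2⁻¹ : ℝ) • ((q * rTR q) * (Θ.transpose * MinkR m R)) ∧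
    blk32 ((k1R q)⁻¹ * B3 (f • 1) Pform 0 Θ F ((MinkR m R)⁻¹ * Pform.transpose)
        0 (Θ.transpose * MinkR m R) ((-f) • 1) * k1R q) = Θ.transpose * MinkR m R ∧
    blk33 ((k1R q)⁻¹ * B3 (f • 1) Pform 0 Θ F ((MinkR m R)⁻¹ * Pform.transpose)
        0 (Θ.transpose * MinkR m R) ((-f) • 1) * k1R q) = -(f • 1 - q * Θ) := by
  have halves (X : Matrix (Fin 1) (Fin m) R) : (2⁻¹ : ℝ) • X + (2⁻¹ : ℝ) • X = X := by
    rw [← add_smul]; norm_num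
  rw [k1R_inv, k1R, k1R, B3_mul, B3_mul, rTR_neg]
  simp only [blk11_B3, blk12_B3, blk21_B3, blk22_B3, blk32_B3, blk33_B3, Matrix.one_mul,
    Matrix.mul_one, Matrix.mul_zero, Matrix.zero_mul, add_zero, zero_add, Matrix.neg_mul,
    Matrix.mul_neg, neg_neg, smul_mul_assoc, mul_smul_comm, Matrix.smul_mul, Matrix.mul_smul,
    smul_neg, smul_zero, Matrix.add_mul, Matrix.mul_add, Matrix.mul_sub, Matrix.mul_assoc,
    neg_smul, true_and]
  refine ⟨by abel, by abel, ?_, ?_⟩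
  · linear_combination (norm := abel) halves (q * (rTR q * (Θᵀ * MinkR m R)))
  · rw [← Matrix.mul_assoc, transpose_mul_MinkR_mul_rTR]
    abel

/-- Dressing the conformal Cartan curvature `Ω = [[f, Pform, 0],[Θ, F, η⁻¹Pformᵀ],[0, Θᵀη, −f]]`
by `u₁ = k₁(q)`: the blocks of `Ω₁ = k₁(q)⁻¹ Ω k₁(q)`. In particular the torsion block `Θ`
is unchanged. -/
theorem stmt_9 (m : ℕ) (hm : 0 < m) (R : Type*) [CommRing R] [Algebra ℝ R]
    (q : Matrix (Fin 1) (Fin m) R)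
    (f : R) (Pform : Matrix (Fin 1) (Fin m) R) (Θ : Matrix (Fin m) (Fin 1) R)
    (F : Matrix (Fin m) (Fin m) R) :
    blk11 ((k1R q)⁻¹ * B3 (f • 1) Pform 0 Θ F ((MinkR m R)⁻¹ * Pform.transpose)
        0 (Θ.transpose * MinkR m R) ((-f) • 1) * k1R q) = f • 1 - q * Θ ∧
    blk21 ((k1R q)⁻¹ * B3 (f • 1) Pform 0 Θ F ((MinkR m R)⁻¹ * Pform.transpose)
        0 (Θ.transpose * MinkR m R) ((-f) • 1) * k1R q) = Θ ∧
    blk22 ((k1R q)⁻¹ * B3 (f • 1) Pform 0 Θ F ((MinkR m R)⁻¹ * Pform.transpose)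
        0 (Θ.transpose * MinkR m R) ((-f) • 1) * k1R q)
      = Θ * q + F - rTR q * (Θ.transpose * MinkR m R) ∧
    blk12 ((k1R q)⁻¹ * B3 (f • 1) Pform 0 Θ F ((MinkR m R)⁻¹ * Pform.transpose)
        0 (Θ.transpose * MinkR m R) ((-f) • 1) * k1R q)
      = Pform - q * (Θ * q + F - rTR q * (Θ.transpose * MinkR m R)) + f • q
          - (2⁻¹ : ℝ) • ((q * rTR q) * (Θ.transpose * MinkR m R)) ∧
    blk32 ((k1R q)⁻¹ * B3 (f • 1) Pform 0 Θ F ((MinkR m R)⁻¹ * Pform.transpose)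
        0 (Θ.transpose * MinkR m R) ((-f) • 1) * k1R q) = Θ.transpose * MinkR m R ∧
    blk33 ((k1R q)⁻¹ * B3 (f • 1) Pform 0 Θ F ((MinkR m R)⁻¹ * Pform.transpose)
        0 (Θ.transpose * MinkR m R) ((-f) • 1) * k1R q) = -(f • 1 - q * Θ) :=
  stmt_9_general m R q f Pform Θ F
end
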